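/- (Corollary 3.3.) Let Z ≥ 0 and let g be a positive Borel measure on [0,∞) (the spectral measure of the physical, renormalized field) such that, in case Z > 0, the ETCR sum rule g([0,∞)) = 1/Z holds. If the singularity hypothesis holds for the Källén–Lehmann functional W_g — i.e. there exist ω > 2 and a Schwartz function f on ℝ⁴ with λ^ω W_{g,λ}(f) not converging to 0 as λ → 0⁺ — then necessarily Z = 0. -/

import Mathlib

open MeasureTheory Filter Topology SchwartzMap
open scoped FourierTransform

/-- The point `(p₀, p) ∈ ℝ⁴` built from a time component `p0 ∈ ℝ` and a
space momentum `p ∈ ℝ³`. -/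
noncomputable def timeSpace (p0 : ℝ) (p : EuclideanSpace ℝ (Fin 3)) :
    EuclideanSpace ℝ (Fin 4) :=
  (EuclideanSpace.equiv (Fin 4) ℝ).symm (Fin.cons p0 (EuclideanSpace.equiv (Fin 3) ℝ p))

/-- The inner Källén–Lehmann momentum integral
`∫_{ℝ³} f̂(√(|p|²+m²), p)/√(|p|²+m²) dp` at squared mass `m2 = m²`,
where `f̂ = 𝓕 f` is the Fourier transform of `f`. -/
noncomputable def KLinner (f : EuclideanSpace ℝ (Fin 4) → ℂ) (m2 : ℝ) : ℂ :=
  ∫ p : EuclideanSpace ℝ (Fin 3),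
    𝓕 f (timeSpace (Real.sqrt (‖p‖ ^ 2 + m2)) p) / (Real.sqrt (‖p‖ ^ 2 + m2) : ℂ)

/-- The Källén–Lehmann two-point functional
`W_ρ(f) = ∫_{[0,∞)} (∫_{ℝ³} f̂(√(|p|²+m²), p)/√(|p|²+m²) dp) dρ(m²)`
associated with a spectral measure `ρ` on `[0,∞)`. -/
noncomputable def KL (ρ : Measure ℝ) (f : EuclideanSpace ℝ (Fin 4) → ℂ) : ℂ :=
  ∫ m2 in Set.Ici (0 : ℝ), KLinner f m2 ∂ρ

/-- The scaled Källén–Lehmann functional `W_{ρ,λ}(f) = λ⁻⁴ W_ρ(f(λ⁻¹ ·))`. -/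
noncomputable def KLscaled (ρ : Measure ℝ) (lam : ℝ) (f : EuclideanSpace ℝ (Fin 4) → ℂ) : ℂ :=
  (lam ^ (4 : ℕ) : ℝ)⁻¹ * KL ρ (fun x => f (lam⁻¹ • x))

/-!
If `Z > 0`, the sum rule makes `g` finite on `[0,∞)`. Since `√(‖p‖² + m²) ≥ ‖p‖` and `f̂`
decays like `(1 + ‖x‖)⁻⁴`, the substitution `p ↦ λ p` bounds the inner momentum integral of
`f(λ⁻¹ ·)` by `λ²` times `∫_{ℝ³} (1 + ‖q‖)⁻⁴ ‖q‖⁻¹ dq < ∞`, uniformly in `m² ≥ 0`. Integrating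
against the finite measure `g` gives `‖W_{g,λ}(f)‖ ≤ K λ⁻²`, so `λ^ω W_{g,λ}(f) → 0` for every
`ω > 2`, contradicting the singularity hypothesis.
-/

open scoped RealInnerProductSpace ENNReal

lemma norm_timeSpace_sq (a : ℝ) (p : EuclideanSpace ℝ (Fin 3)) :
    ‖timeSpace a p‖ ^ 2 = a ^ 2 + ‖p‖ ^ 2 := by
  simp [timeSpace, EuclideanSpace.norm_sq_eq, Fin.sum_univ_succ]

lemma norm_le_norm_timeSpace (a : ℝ) (p : EuclideanSpace ℝ (Fin 3)) :
    ‖p‖ ≤ ‖timeSpace a p‖ :=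
  pow_le_pow_iff_left₀ (norm_nonneg _) (norm_nonneg _) two_ne_zero |>.1 <| by
    rw [norm_timeSpace_sq]; exact le_add_of_nonneg_left (sq_nonneg a)

lemma fourier_comp_inv_smul {V E : Type*} [NormedAddCommGroup V] [InnerProductSpace ℝ V]
    [FiniteDimensional ℝ V] [MeasurableSpace V] [BorelSpace V] [NormedAddCommGroup E]
    [NormedSpace ℂ E] (f : V → E) {c : ℝ} (hc : 0 < c) (ξ : V) :
    𝓕 (fun x => f (c⁻¹ • x)) ξ = (c ^ Module.finrank ℝ V) • 𝓕 f (c • ξ) := by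
  have hinner : ∀ x : V, ⟪c⁻¹ • x, c • ξ⟫ = ⟪x, ξ⟫ := fun x => by
    rw [real_inner_smul_left, real_inner_smul_right, inv_mul_cancel_left₀ hc.ne']
  simp only [Real.fourier_eq]
  rw [← Measure.integral_comp_inv_smul_of_nonneg volume _ hc.le]
  simp only [hinner]

lemma SchwartzMap.exists_norm_le_mul_inv_one_add_norm_pow {V E : Type*}
    [NormedAddCommGroup V] [NormedSpace ℝ V] [NormedAddCommGroup E] [NormedSpace ℝ E]
    (f : 𝓢(V, E)) (k : ℕ) :
    ∃ C, 0 ≤ C ∧ ∀ x, ‖f x‖ ≤ C * ((1 + ‖x‖) ^ k)⁻¹ := by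
  refine ⟨2 ^ k * (Finset.Iic (k, 0)).sup (fun m => SchwartzMap.seminorm ℝ m.1 m.2) f,
    by positivity, fun x => ?_⟩
  have h := one_add_le_sup_seminorm_apply (𝕜 := ℝ) (m := (k, 0)) le_rfl le_rfl f x
  rw [norm_iteratedFDeriv_zero] at h
  rw [← div_eq_mul_inv, le_div_iff₀ (by positivity), mul_comm]
  exact h

lemma integrable_inv_one_add_norm_pow_mul_norm {E : Type*} [NormedAddCommGroup E]
    [NormedSpace ℝ E] [FiniteDimensional ℝ E] [MeasurableSpace E] [BorelSpace E]
    (μ : Measure E) [μ.IsAddHaarMeasure] {k : ℕ} (hE : 2 ≤ Module.finrank ℝ E)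
    (hk : Module.finrank ℝ E < k + 1) :
    Integrable (fun q : E => ((1 + ‖q‖) ^ k * ‖q‖)⁻¹) μ := by
  have : Nontrivial E := Module.nontrivial_of_finrank_pos (R := ℝ) (by omega)
  rw [integrable_fun_norm_addHaar μ (f := fun y : ℝ => ((1 + y) ^ k * y)⁻¹)]
  set d := Module.finrank ℝ E
  -- in polar coordinates the radial integrand is `y ^ (d - 2) / (1 + y) ^ k ≤ (1 + y) ^ (d - 2 - k)`
  have hmajor : Integrable (fun y : ℝ => (1 + ‖y‖) ^ (-((k + 2 - d : ℕ) : ℝ))) :=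
    integrable_one_add_norm (by simp; omega)
  refine hmajor.integrableOn.mono' (by fun_prop) ?_
  filter_upwards [ae_restrict_mem measurableSet_Ioi] with y (hy : 0 < y)
  have hsplit : (1 + y) ^ k = (1 + y) ^ (k + 2 - d) * (1 + y) ^ (d - 2) := by
    rw [← pow_add, show k + 2 - d + (d - 2) = k by omega]
  have hy_pow : y ^ (d - 1) = y ^ (d - 2) * y := by
    rw [← pow_succ, show d - 2 + 1 = d - 1 by omega]
  rw [Real.rpow_neg (by positivity), Real.rpow_natCast, Real.norm_of_nonneg hy.le, smul_eq_mul,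
    Real.norm_of_nonneg (by positivity), hsplit, hy_pow]
  calc y ^ (d - 2) * y * ((1 + y) ^ (k + 2 - d) * (1 + y) ^ (d - 2) * y)⁻¹
      = ((1 + y) ^ (k + 2 - d))⁻¹ * (y ^ (d - 2) / (1 + y) ^ (d - 2)) := by
        field_simp
    _ ≤ ((1 + y) ^ (k + 2 - d))⁻¹ * 1 := by
        gcongr
        exact div_le_one_of_le₀ (pow_le_pow_left₀ hy.le (by linarith) _) (by positivity)
    _ = ((1 + y) ^ (k + 2 - d))⁻¹ := mul_one _

lemma norm_KLinner_comp_inv_smul_le {f : EuclideanSpace ℝ (Fin 4) → ℂ} {C : ℝ} (hC0 : 0 ≤ C)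
    (hC : ∀ x, ‖𝓕 f x‖ ≤ C * ((1 + ‖x‖) ^ 4)⁻¹) {lam : ℝ} (hlam : 0 < lam) {m2 : ℝ}
    (hm2 : 0 ≤ m2) :
    ‖KLinner (fun x => f (lam⁻¹ • x)) m2‖ ≤
      lam ^ 2 * (C * ∫ q : EuclideanSpace ℝ (Fin 3), ((1 + ‖q‖) ^ 4 * ‖q‖)⁻¹) := by
  set φ : EuclideanSpace ℝ (Fin 3) → ℝ := fun q => ((1 + ‖q‖) ^ 4 * ‖q‖)⁻¹
  have hpoint : ∀ p : EuclideanSpace ℝ (Fin 3), p ≠ 0 →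
      ‖𝓕 (fun x => f (lam⁻¹ • x)) (timeSpace (Real.sqrt (‖p‖ ^ 2 + m2)) p) /
        (Real.sqrt (‖p‖ ^ 2 + m2) : ℂ)‖ ≤ lam ^ 5 * C * φ (lam • p) := by
    intro p hp
    set s := Real.sqrt (‖p‖ ^ 2 + m2)
    have hp_pos : 0 < ‖p‖ := norm_pos_iff.2 hp
    have hp_le_s : ‖p‖ ≤ s := Real.le_sqrt_of_sq_le (by linarith)
    have hdecay : ‖𝓕 f (lam • timeSpace s p)‖ ≤ C * ((1 + lam * ‖p‖) ^ 4)⁻¹ := by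
      refine (hC _).trans (mul_le_mul_of_nonneg_left (inv_anti₀ (by positivity) ?_) hC0)
      rw [norm_smul, Real.norm_of_nonneg hlam.le]
      gcongr
      exact norm_le_norm_timeSpace s p
    rw [norm_div, fourier_comp_inv_smul f hlam, finrank_euclideanSpace_fin, norm_smul,
      Complex.norm_real, Real.norm_of_nonneg (by positivity),
      Real.norm_of_nonneg (hp_pos.le.trans hp_le_s)]
    calc lam ^ 4 * ‖𝓕 f (lam • timeSpace s p)‖ / s
        ≤ lam ^ 4 * (C * ((1 + lam * ‖p‖) ^ 4)⁻¹) / ‖p‖ := by gcongr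
      _ = lam ^ 5 * C * φ (lam • p) := by
        simp only [φ, norm_smul, Real.norm_of_nonneg hlam.le]
        field_simp
  have hφ : Integrable φ := integrable_inv_one_add_norm_pow_mul_norm volume
    (by simp) (by simp)
  calc ‖KLinner (fun x => f (lam⁻¹ • x)) m2‖
      ≤ ∫ p, lam ^ 5 * C * φ (lam • p) := by
        refine norm_integral_le_of_norm_le ((hφ.comp_smul hlam.ne').const_mul _) ?_
        filter_upwards [Measure.ae_ne volume 0] with p hp using hpoint p hp
    _ = lam ^ 5 * C * ((lam ^ 3)⁻¹ * ∫ q, φ q) := by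
        rw [integral_const_mul, Measure.integral_comp_smul_of_nonneg volume φ lam (hR := hlam.le),
          finrank_euclideanSpace_fin, smul_eq_mul]
    _ = lam ^ 2 * (C * ∫ q, φ q) := by
        field_simp

lemma norm_KLscaled_le (f : 𝓢(EuclideanSpace ℝ (Fin 4), ℂ)) {ρ : Measure ℝ}
    (hρ : ρ (Set.Ici 0) < ∞) :
    ∃ K, ∀ lam > 0, ‖KLscaled ρ lam ⇑f‖ ≤ K * (lam ^ 2)⁻¹ := by
  obtain ⟨C, hC0, hC⟩ := (𝓕 f).exists_norm_le_mul_inv_one_add_norm_pow 4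
  set B := ∫ q : EuclideanSpace ℝ (Fin 3), ((1 + ‖q‖) ^ 4 * ‖q‖)⁻¹
  refine ⟨C * B * ρ.real (Set.Ici 0), fun lam hlam => ?_⟩
  have hKL : ‖KL ρ (fun x => f (lam⁻¹ • x))‖ ≤ lam ^ 2 * (C * B) * ρ.real (Set.Ici 0) :=
    norm_setIntegral_le_of_norm_le_const hρ fun _ hm2 =>
      norm_KLinner_comp_inv_smul_le hC0 hC hlam hm2
  rw [KLscaled, norm_mul, Complex.norm_real, Real.norm_of_nonneg (by positivity)]
  calc (lam ^ 4)⁻¹ * ‖KL ρ (fun x => f (lam⁻¹ • x))‖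
      ≤ (lam ^ 4)⁻¹ * (lam ^ 2 * (C * B) * ρ.real (Set.Ici 0)) := by gcongr
    _ = C * B * ρ.real (Set.Ici 0) * (lam ^ 2)⁻¹ := by
        field_simp

lemma tendsto_rpow_mul_nhdsGT_zero_of_norm_le {u : ℝ → ℂ} {K ω : ℝ} {d : ℕ} (hω : d < ω)
    (hu : ∀ lam > 0, ‖u lam‖ ≤ K * (lam ^ d)⁻¹) :
    Tendsto (fun lam : ℝ => ((lam ^ ω : ℝ) : ℂ) * u lam) (𝓝[>] 0) (𝓝 0) := by
  have hbound : ∀ lam > (0 : ℝ), ‖((lam ^ ω : ℝ) : ℂ) * u lam‖ ≤ lam ^ (ω - d) * K := by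
    intro lam hlam
    rw [norm_mul, Complex.norm_real, Real.norm_of_nonneg (by positivity),
      Real.rpow_sub hlam, Real.rpow_natCast]
    calc lam ^ ω * ‖u lam‖ ≤ lam ^ ω * (K * (lam ^ d)⁻¹) := by gcongr; exact hu lam hlam
      _ = lam ^ ω / lam ^ d * K := by ring
  have hrpow : Tendsto (fun lam : ℝ => lam ^ (ω - d)) (𝓝[>] 0) (𝓝 0) := by
    have h := (Real.continuousAt_rpow_const 0 (ω - d) (Or.inr (by linarith))).tendsto
    rw [Real.zero_rpow (by linarith)] at h
    exact h.mono_left nhdsWithin_le_nhds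
  exact squeeze_zero_norm' (eventually_nhdsWithin_of_forall hbound)
    (by simpa using hrpow.mul_const K)

/-- Corollary 3.3: Let `Z ≥ 0` and let `g` be the spectral measure of the
physical (renormalized) field, satisfying the ETCR sum rule `g([0,∞)) = 1/Z` whenever
`Z > 0`. If the singularity hypothesis holds for `W_g`, i.e. there exist `ω > 2` and a
Schwartz `f` on ℝ⁴ such that `λ^ω W_{g,λ}(f)` does not tend to `0` as `λ → 0⁺`, then
necessarily `Z = 0`. -/
theorem singularity_forces_Z_zero (Z : ℝ) (hZ : 0 ≤ Z) (g : Measure ℝ)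
    (hsum : 0 < Z → g (Set.Ici (0 : ℝ)) = ENNReal.ofReal (1 / Z))
    (hsing : ∃ ω : ℝ, 2 < ω ∧ ∃ f : 𝓢(EuclideanSpace ℝ (Fin 4), ℂ),
      ¬ Tendsto (fun lam : ℝ => ((lam ^ ω : ℝ) : ℂ) * KLscaled g lam ⇑f)
          (𝓝[>] (0 : ℝ)) (𝓝 0)) :
    Z = 0 := by
  by_contra hZ0
  obtain ⟨ω, hω, f, hf⟩ := hsing
  have hfin : g (Set.Ici 0) < ∞ := by
    rw [hsum (lt_of_le_of_ne hZ (Ne.symm hZ0))]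
    exact ENNReal.ofReal_lt_top
  obtain ⟨K, hK⟩ := norm_KLscaled_le f hfin
  exact hf (tendsto_rpow_mul_nhdsGT_zero_of_norm_le (d := 2) (by exact_mod_cast hω) hK)
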